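/- arXiv:1512.05991 — 6 statements merged into one kernel-verified Lean document; each statement's English description precedes it below -/
import Mathlib

section
/- For all integers s ≥ 1 and t ≥ 1, one has k(s,t) < (s+1)^t. -/
/-- `kTuples s t` is the number of `s`-tuples `(λ₁, …, λ_s)` of integer partitions
(of arbitrary nonnegative integers) with `|λ₁| + ⋯ + |λ_s| = t`. -/
noncomputable def kTuples (s t : ℕ) : ℕ :=
  Nat.card { f : Fin s → Σ n : ℕ, Nat.Partition n // ∑ i, (f i).1 = t }

/-!
Removing one part, of some size `a ≥ 1`, from one of the `s` partitions of a tuple of total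
size `t + 1` leaves a tuple of total size `t + 1 - a`; hence
`k(s, t + 1) ≤ s · ∑_{j ≤ t} k(s, j)`. By induction on `t` this gives
`∑_{j ≤ t} k(s, j) ≤ (s + 1) ^ t`, so `k(s, t + 1) ≤ s (s + 1) ^ t < (s + 1) ^ (t + 1)`.
-/

open Finset

theorem Fintype.sum_update_add_self {ι M : Type*} [Fintype ι] [DecidableEq ι] [AddCommMonoid M]
    (g : ι → M) (i : ι) (b : M) : ∑ k, Function.update g i b k + g i = ∑ k, g k + b := by
  rw [sum_update_of_mem (mem_univ i), ← add_sum_erase _ _ (mem_univ i),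
    sdiff_singleton_eq_erase]
  ac_rfl

namespace Nat.Partition

def addPart {n a : ℕ} (ha : 0 < a) (p : n.Partition) : (n + a).Partition where
  parts := a ::ₘ p.parts
  parts_pos := by grind
  parts_sum := by rw [Multiset.sum_cons, p.parts_sum, add_comm]

theorem sigma_ext {x y : Σ n : ℕ, n.Partition} (h : x.2.parts = y.2.parts) : x = y := by
  obtain ⟨n, p⟩ := x
  obtain ⟨m, q⟩ := y
  obtain rfl : n = m := by rw [← p.parts_sum, ← q.parts_sum, h]
  exact congrArg _ (Nat.Partition.ext h)

end Nat.Partition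

abbrev PartitionTuple (s n : ℕ) : Type :=
  { f : Fin s → Σ m : ℕ, m.Partition // ∑ i, (f i).1 = n }

namespace PartitionTuple

variable {s : ℕ}

theorem sum_fst_update_add_self (f : Fin s → Σ m : ℕ, m.Partition) (i : Fin s)
    (x : Σ m : ℕ, m.Partition) :
    ∑ k, (Function.update f i x k).1 + (f i).1 = ∑ k, (f k).1 + x.1 := by
  simp only [Function.apply_update (fun _ (y : Σ m : ℕ, m.Partition) => y.1)]
  exact Fintype.sum_update_add_self _ i x.1

instance : Subsingleton (PartitionTuple s 0) := by
  refine ⟨fun f g => Subtype.ext <| funext fun i => ?_⟩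
  have eq_zero : ∀ x : Σ m : ℕ, m.Partition, x.1 = 0 → x = ⟨0, default⟩ := by
    rintro ⟨_, p⟩ rfl
    rw [Subsingleton.elim p default]
  rw [eq_zero _ ((sum_eq_zero_iff.1 f.2) i (mem_univ i)),
    eq_zero _ ((sum_eq_zero_iff.1 g.2) i (mem_univ i))]

def addPart (t : ℕ) : (Σ j : Fin (t + 1), Fin s × PartitionTuple s j) → PartitionTuple s (t + 1)
  | ⟨j, i, f⟩ =>
    ⟨Function.update f.1 i ⟨(f.1 i).1 + (t + 1 - j), (f.1 i).2.addPart (by omega)⟩, by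
      have h := sum_fst_update_add_self f.1 i ⟨_, (f.1 i).2.addPart (by omega : 0 < t + 1 - j)⟩
      dsimp only at h
      have := f.2
      omega⟩

theorem addPart_surjective (t : ℕ) : Function.Surjective (addPart (s := s) t) := by
  rintro ⟨g, hg⟩
  obtain ⟨i, -, hi⟩ : ∃ i ∈ univ, (g i).1 ≠ 0 :=
    exists_ne_zero_of_sum_ne_zero (by omega)
  obtain ⟨a, ha⟩ : ∃ a, a ∈ (g i).2.parts :=
    Multiset.exists_mem_of_ne_zero fun h => hi (by rw [← (g i).2.parts_sum, h, Multiset.sum_zero])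
  have ha_pos := (g i).2.parts_pos ha
  have ha_le_fst := Nat.Partition.le_of_mem_parts ha
  have ha_le : a ≤ t + 1 := ha_le_fst.trans
    (hg ▸ single_le_sum (f := fun k => (g k).1) (fun _ _ => Nat.zero_le _) (mem_univ i))
  let x : Σ m : ℕ, m.Partition :=
    ⟨(g i).1 - a, Nat.Partition.partitionWithPartEquiv ha_pos ha_le_fst ⟨(g i).2, ha⟩⟩
  have hsum : ∑ k, (Function.update g i x k).1 = t + 1 - a := by
    have : ∑ k, (Function.update g i x k).1 + (g i).1 = ∑ k, (g k).1 + ((g i).1 - a) :=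
      sum_fst_update_add_self g i x
    omega
  refine ⟨⟨⟨t + 1 - a, by omega⟩, i, ⟨Function.update g i x, hsum⟩⟩,
    Subtype.ext <| funext fun k => ?_⟩
  rcases eq_or_ne k i with rfl | hk
  · refine Nat.Partition.sigma_ext ?_
    simp only [addPart]
    rw [Function.update_self]
    dsimp only [Nat.Partition.addPart]
    rw [Function.update_self]
    simp [x, show t + 1 - (t + 1 - a) = a by omega, Multiset.cons_erase ha]
  · simp [addPart, hk]

instance (n : ℕ) : Finite (PartitionTuple s n) := by
  induction n using Nat.strong_induction_on with
  | _ n ih =>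
    rcases n with _ | t
    · infer_instance
    · have (j : Fin (t + 1)) : Finite (PartitionTuple s j) := ih j (by omega)
      exact Finite.of_surjective _ (addPart_surjective t)

end PartitionTuple

theorem kTuples_zero_le_one (s : ℕ) : kTuples s 0 ≤ 1 :=
  Finite.card_le_one_iff_subsingleton.2 inferInstance

theorem kTuples_succ_le_mul_sum (s t : ℕ) :
    kTuples s (t + 1) ≤ s * ∑ j ∈ range (t + 1), kTuples s j :=
  calc kTuples s (t + 1)
      ≤ Nat.card (Σ j : Fin (t + 1), Fin s × PartitionTuple s j) :=
        Nat.card_le_card_of_surjective _ (PartitionTuple.addPart_surjective t)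
    _ = ∑ j : Fin (t + 1), s * kTuples s j := by simp [Nat.card_sigma, kTuples]
    _ = s * ∑ j ∈ range (t + 1), kTuples s j := by
        rw [mul_sum, Fin.sum_univ_eq_sum_range (fun j => s * kTuples s j)]

theorem sum_range_kTuples_le (s t : ℕ) : ∑ j ∈ range (t + 1), kTuples s j ≤ (s + 1) ^ t := by
  induction t with
  | zero => simpa using kTuples_zero_le_one s
  | succ t ih =>
    calc ∑ j ∈ range (t + 2), kTuples s j
        = ∑ j ∈ range (t + 1), kTuples s j + kTuples s (t + 1) := sum_range_succ _ _
      _ ≤ (s + 1) ^ t + s * (s + 1) ^ t :=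
        add_le_add ih ((kTuples_succ_le_mul_sum s t).trans (Nat.mul_le_mul_left s ih))
      _ = (s + 1) ^ (t + 1) := by ring

theorem kTuples_succ_le (s t : ℕ) : kTuples s (t + 1) ≤ s * (s + 1) ^ t :=
  (kTuples_succ_le_mul_sum s t).trans (Nat.mul_le_mul_left s (sum_range_kTuples_le s t))

theorem kTuples_lt_succ_pow_general (s t : ℕ) (ht : 1 ≤ t) :
    kTuples s t < (s + 1) ^ t := by
  obtain ⟨t, rfl⟩ := Nat.exists_eq_add_of_le' ht
  calc kTuples s (t + 1) ≤ s * (s + 1) ^ t := kTuples_succ_le s t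
    _ < (s + 1) * (s + 1) ^ t := Nat.mul_lt_mul_of_pos_right (lt_add_one s) (by positivity)
    _ = (s + 1) ^ (t + 1) := (pow_succ' _ _).symm

theorem kTuples_lt_succ_pow (s t : ℕ) (hs : 1 ≤ s) (ht : 1 ≤ t) :
    kTuples s t < (s + 1) ^ t :=
  kTuples_lt_succ_pow_general s t ht
end

section
/- For all integers s ≥ 2 and t ≥ 1 with not (s = 2 and t ≤ 6), one has k(s,t) ≤ s^t. -/
/-!
Splitting off the first partition gives `k(s+1, t) = ∑_{i+j=t} p(i) k(s, j)`. Removing a part `1`,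
or else replacing the largest part `m` by `m - 2` ones, shows `p(n+2) ≤ p(n+1) + p(n)`, strictly
for `n ≥ 3`; hence `p(i) ≤ F_{i+1}` (Fibonacci numbers). So `k(s+1, ·)` is bounded by the
convolution of a bound for `k(s, ·)` with `(F_{i+1})`, which satisfies the Fibonacci recurrence
with an inhomogeneous term, and it suffices to compare such convolutions with `2^t` (`s = 2`,
`t ≥ 8`), `3^t` (`s = 3`) and `(s+1)^t` (given `s^t`). The remaining case `k(2, 7)` uses the
strict inequality, in the form `p(7) ≤ 20`.
-/

open Finset Nat

theorem Multiset.sup_mem_of_ne_zero {α : Type*} [LinearOrder α] [OrderBot α] {s : Multiset α}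
    (hs : s ≠ 0) : s.sup ∈ s := by
  induction s using Multiset.induction_on with
  | empty => exact absurd rfl hs
  | cons a s ih =>
    rw [Multiset.sup_cons]
    rcases eq_or_ne s 0 with rfl | h
    · simp
    · rcases max_choice a s.sup with h' | h' <;> simp [h', ih h]

namespace Nat.Partition

theorem two_le_of_one_notMem {n a : ℕ} {q : Nat.Partition n} (h : 1 ∉ q.parts)
    (ha : a ∈ q.parts) : 2 ≤ a := by
  have := q.parts_pos ha
  have : a ≠ 1 := fun h' => h (h' ▸ ha)
  omega

theorem sup_parts_mem {n : ℕ} (q : Nat.Partition (n + 1)) : q.parts.sup ∈ q.parts :=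
  Multiset.sup_mem_of_ne_zero fun h => by simpa [h] using q.parts_sum

def eraseOne {n : ℕ} (q : {q : Nat.Partition (n + 1) // 1 ∈ q.parts}) : Nat.Partition n where
  parts := q.1.parts.erase 1
  parts_pos hi := q.1.parts_pos (Multiset.mem_of_mem_erase hi)
  parts_sum := by
    have := Multiset.sum_erase q.2
    have := q.1.parts_sum
    omega

theorem eraseOne_injective {n : ℕ} : Function.Injective (eraseOne (n := n)) := by
  rintro ⟨p, hp⟩ ⟨q, hq⟩ h
  have h' : p.parts.erase 1 = q.parts.erase 1 := congrArg parts h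
  exact Subtype.ext <| Nat.Partition.ext <| by
    rw [← Multiset.cons_erase hp, ← Multiset.cons_erase hq, h']

def largestPartToOnes {n : ℕ} (q : {q : Nat.Partition (n + 2) // 1 ∉ q.parts}) :
    Nat.Partition n where
  parts := q.1.parts.erase q.1.parts.sup + Multiset.replicate (q.1.parts.sup - 2) 1
  parts_pos hi := by
    rcases Multiset.mem_add.1 hi with hi | hi
    · exact q.1.parts_pos (Multiset.mem_of_mem_erase hi)
    · rw [Multiset.eq_of_mem_replicate hi]; exact one_pos
  parts_sum := by
    have hmem := q.1.sup_parts_mem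
    have h2 := two_le_of_one_notMem q.2 hmem
    have := Multiset.sum_erase hmem
    have := q.1.parts_sum
    simp only [Multiset.sum_add, Multiset.sum_replicate, smul_eq_mul, mul_one]
    omega

theorem count_one_largestPartToOnes {n : ℕ} (q : {q : Nat.Partition (n + 2) // 1 ∉ q.parts}) :
    (largestPartToOnes q).parts.count 1 = q.1.parts.sup - 2 := by
  have : 1 ∉ q.1.parts.erase q.1.parts.sup := fun h => q.2 (Multiset.mem_of_mem_erase h)
  simp [largestPartToOnes, Multiset.count_eq_zero.2 this]

theorem largestPartToOnes_injective {n : ℕ} :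
    Function.Injective (largestPartToOnes (n := n)) := by
  intro p q h
  have hsup : p.1.parts.sup = q.1.parts.sup := by
    have := congrArg (fun r => r.parts.count 1) h
    simp only [count_one_largestPartToOnes] at this
    have := two_le_of_one_notMem p.2 p.1.sup_parts_mem
    have := two_le_of_one_notMem q.2 q.1.sup_parts_mem
    omega
  have herase : p.1.parts.erase q.1.parts.sup = q.1.parts.erase q.1.parts.sup := by
    have := congrArg parts h
    simp only [largestPartToOnes, hsup] at this
    exact add_right_cancel this
  exact Subtype.ext <| Nat.Partition.ext <| by
    rw [← Multiset.cons_erase p.1.sup_parts_mem, ← Multiset.cons_erase q.1.sup_parts_mem, hsup,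
      herase]

theorem largestPartToOnes_ne_indiscrete {n : ℕ} (hn : 3 ≤ n)
    (q : {q : Nat.Partition (n + 2) // 1 ∉ q.parts}) : largestPartToOnes q ≠ indiscrete n := by
  intro h
  have hparts :
      q.1.parts.erase q.1.parts.sup + Multiset.replicate (q.1.parts.sup - 2) 1 = {n} := by
    rw [← indiscrete_parts (by omega), ← h]; rfl
  have hm : q.1.parts.sup - 2 = 0 := by
    by_contra hm
    have : 1 ∈ ({n} : Multiset ℕ) :=
      hparts ▸ Multiset.mem_add.2 (.inr (Multiset.mem_replicate.2 ⟨hm, rfl⟩))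
    rw [Multiset.mem_singleton] at this
    omega
  have hn : n ∈ q.1.parts := by
    have : n ∈ q.1.parts.erase q.1.parts.sup + Multiset.replicate (q.1.parts.sup - 2) 1 := by
      rw [hparts]; exact Multiset.mem_singleton_self n
    rw [hm, Multiset.replicate_zero, add_zero] at this
    exact Multiset.mem_of_mem_erase this
  have := Multiset.le_sup hn
  omega

theorem card_le_add_card_one_notMem (n : ℕ) :
    Fintype.card (Nat.Partition (n + 1)) ≤ Fintype.card (Nat.Partition n) +
      Fintype.card {q : Nat.Partition (n + 1) // 1 ∉ q.parts} := by
  have hcompl := Fintype.card_subtype_compl fun q : Nat.Partition (n + 1) => 1 ∈ q.parts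
  have hsub := Fintype.card_subtype_le fun q : Nat.Partition (n + 1) => 1 ∈ q.parts
  have hone := Fintype.card_le_of_injective _ (eraseOne_injective (n := n))
  omega

theorem card_add_two_le (n : ℕ) :
    Fintype.card (Nat.Partition (n + 2)) ≤
      Fintype.card (Nat.Partition (n + 1)) + Fintype.card (Nat.Partition n) :=
  (card_le_add_card_one_notMem (n + 1)).trans <| Nat.add_le_add_left
    (Fintype.card_le_of_injective _ largestPartToOnes_injective) _

theorem card_add_two_lt {n : ℕ} (hn : 3 ≤ n) :
    Fintype.card (Nat.Partition (n + 2)) <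
      Fintype.card (Nat.Partition (n + 1)) + Fintype.card (Nat.Partition n) :=
  (card_le_add_card_one_notMem (n + 1)).trans_lt <| Nat.add_lt_add_left
    (Fintype.card_lt_of_injective_of_notMem _ largestPartToOnes_injective (b := indiscrete n)
      (by rintro ⟨q, hq⟩; exact largestPartToOnes_ne_indiscrete hn q hq)) _

theorem card_le_fib (n : ℕ) : Fintype.card (Nat.Partition n) ≤ fib (n + 1) := by
  induction n using Nat.twoStepInduction with
  | zero => simp
  | one => simp
  | more n ih₀ ih₁ =>
    rw [fib_add_two]
    exact (card_add_two_le n).trans (by omega)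

end Nat.Partition

abbrev PartitionTuples (s t : ℕ) :=
  { f : Fin s → Σ n : ℕ, Nat.Partition n // ∑ i, (f i).1 = t }

def PartitionTuples.succEquiv (s t : ℕ) :
    PartitionTuples (s + 1) t ≃
      Σ x : antidiagonal t, Nat.Partition x.1.1 × PartitionTuples s x.1.2 where
  toFun f := ⟨⟨((f.1 0).1, ∑ i : Fin s, (f.1 i.succ).1), by simpa [Fin.sum_univ_succ] using f.2⟩,
    (f.1 0).2, ⟨Fin.tail f.1, rfl⟩⟩
  invFun x := ⟨Fin.cons ⟨x.1.1.1, x.2.1⟩ x.2.2.1, by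
    simpa [Fin.sum_univ_succ, x.2.2.2] using mem_antidiagonal.1 x.1.2⟩
  left_inv f := Subtype.ext (Fin.cons_self_tail f.1)
  right_inv := by
    rintro ⟨⟨⟨a, b⟩, h⟩, p, g, hg⟩
    change ∑ i, (g i).1 = b at hg
    subst hg
    rfl

instance PartitionTuples.finite (s t : ℕ) : Finite (PartitionTuples s t) := by
  induction s generalizing t with
  | zero => infer_instance
  | succ s ih => exact Finite.of_equiv _ (succEquiv s t).symm

theorem kTuples_zero (t : ℕ) : kTuples 0 t = if t = 0 then 1 else 0 := by
  split_ifs with ht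
  · subst ht; simp [kTuples]
  · simp [kTuples, Ne.symm ht]

theorem kTuples_succ (s t : ℕ) :
    kTuples (s + 1) t =
      ∑ x ∈ antidiagonal t, Fintype.card (Nat.Partition x.1) * kTuples s x.2 := by
  rw [kTuples, Nat.card_congr (PartitionTuples.succEquiv s t), Nat.card_sigma,
    ← sum_coe_sort (antidiagonal t)]
  simp [Nat.card_prod, Nat.card_eq_fintype_card, kTuples]

theorem kTuples_one (t : ℕ) : kTuples 1 t = Fintype.card (Nat.Partition t) := by
  rw [kTuples_succ, sum_eq_single (t, 0)]
  · simp [kTuples_zero]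
  · rintro ⟨a, b⟩ hab hne
    rw [HasAntidiagonal.mem_antidiagonal] at hab
    rw [kTuples_zero, if_neg (by rintro rfl; simp_all), mul_zero]
  · simp

def fibConv (A : ℕ → ℕ) (t : ℕ) : ℕ := ∑ x ∈ antidiagonal t, fib (x.1 + 1) * A x.2

@[simp] theorem fibConv_zero (A : ℕ → ℕ) : fibConv A 0 = A 0 := by simp [fibConv]

@[simp] theorem fibConv_one (A : ℕ → ℕ) : fibConv A 1 = A 1 + A 0 := by
  simp [fibConv, sum_antidiagonal_succ]

theorem fibConv_add_two (A : ℕ → ℕ) (t : ℕ) :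
    fibConv A (t + 2) = fibConv A (t + 1) + fibConv A t + A (t + 2) := by
  simp only [fibConv, sum_antidiagonal_succ, fib_add_two, add_mul, sum_add_distrib, zero_add,
    fib_zero, fib_one, zero_mul, one_mul]
  ring

theorem fibConv_le_of_step {A B : ℕ → ℕ} {n : ℕ} (h₀ : fibConv A n ≤ B n)
    (h₁ : fibConv A (n + 1) ≤ B (n + 1))
    (hB : ∀ t ≥ n, B (t + 1) + B t + A (t + 2) ≤ B (t + 2)) {t : ℕ} (ht : n ≤ t) :
    fibConv A t ≤ B t := by
  obtain ⟨k, rfl⟩ := Nat.exists_eq_add_of_le ht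
  induction k using Nat.twoStepInduction with
  | zero => exact h₀
  | one => exact h₁
  | more k ih₀ ih₁ =>
    have h₀ : fibConv A (n + k) ≤ B (n + k) := ih₀ (by omega)
    have h₁ : fibConv A (n + k + 1) ≤ B (n + k + 1) := ih₁ (by omega)
    rw [← add_assoc, fibConv_add_two]
    have := hB (n + k) (by omega)
    omega

theorem fib_add_three_le_two_pow : ∀ {t : ℕ}, 3 ≤ t → fib (t + 3) ≤ 2 ^ t
  | 3, _ => by decide
  | 4, _ => by decide
  | t + 5, _ => by
    have h₀ : fib (t + 6) ≤ 2 ^ (t + 3) := fib_add_three_le_two_pow (t := t + 3) (by omega)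
    have h₁ : fib (t + 6 + 1) ≤ 2 ^ (t + 4) := fib_add_three_le_two_pow (t := t + 4) (by omega)
    rw [show t + 5 + 3 = t + 6 + 2 from rfl, fib_add_two]
    rw [pow_succ] at h₁
    rw [pow_succ, pow_succ]
    omega

theorem fibConv_fib_le_two_pow {t : ℕ} (ht : 8 ≤ t) :
    fibConv (fun j => fib (j + 1)) t ≤ 2 ^ t := by
  refine fibConv_le_of_step (by decide) (by decide) (fun t ht => ?_) ht
  have : fib (t + 2 + 1) ≤ 2 ^ t := fib_add_three_le_two_pow (by omega)
  rw [pow_succ, pow_succ]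
  omega

theorem fibConv_fibConv_fib_le_three_pow (t : ℕ) :
    fibConv (fibConv fun j => fib (j + 1)) t ≤ 3 ^ t := by
  refine fibConv_le_of_step (by decide) (by decide) (fun t _ => ?_) (Nat.zero_le t)
  -- `3 ^ (t + 2) = 3 ^ (t + 1) + 3 ^ t + 5 * 3 ^ t`
  have key : fibConv (fun j => fib (j + 1)) (t + 2) ≤ 5 * 3 ^ t := by
    rcases Nat.lt_or_ge t 6 with ht | ht
    · interval_cases t <;> decide
    · calc fibConv (fun j => fib (j + 1)) (t + 2) ≤ 2 ^ (t + 2) :=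
            fibConv_fib_le_two_pow (by omega)
        _ ≤ 5 * 3 ^ t := by
          have := Nat.pow_le_pow_left (show 2 ≤ 3 by norm_num) t
          rw [pow_add]; omega
  rw [pow_succ, pow_succ]
  omega

theorem fibConv_pow_le_pow {s : ℕ} (hs : 1 ≤ s) (t : ℕ) : fibConv (s ^ ·) t ≤ (s + 1) ^ t := by
  refine fibConv_le_of_step (by simp) (by simp) (fun t _ => ?_) (Nat.zero_le t)
  have : s ^ t ≤ (s + 1) ^ t := Nat.pow_le_pow_left (by omega) t
  simp only [pow_succ]
  nlinarith [Nat.mul_le_mul_right (s * s) this, Nat.mul_le_mul_left ((s + 1) ^ t) hs]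

theorem kTuples_succ_le_fibConv {s : ℕ} {A : ℕ → ℕ} (hA : ∀ u, kTuples s u ≤ A u) (t : ℕ) :
    kTuples (s + 1) t ≤ fibConv A t :=
  (kTuples_succ s t).trans_le <|
    sum_le_sum fun x _ => Nat.mul_le_mul (Nat.Partition.card_le_fib x.1) (hA x.2)

theorem kTuples_one_le (t : ℕ) : kTuples 1 t ≤ fib (t + 1) :=
  (kTuples_one t).trans_le (Nat.Partition.card_le_fib t)

theorem kTuples_two_le_two_pow {t : ℕ} (ht : 8 ≤ t) : kTuples 2 t ≤ 2 ^ t :=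
  (kTuples_succ_le_fibConv kTuples_one_le t).trans (fibConv_fib_le_two_pow ht)

theorem kTuples_two_seven_le : kTuples 2 7 ≤ 2 ^ 7 := by
  -- with `fib (j + 1)` in place of `q j` the sum is `130`; `p(7) < p(6) + p(5)` lowers `21` to `20`
  let q : ℕ → ℕ := fun j => if j = 7 then 20 else fib (j + 1)
  have hq : ∀ j ≤ 7, Fintype.card (Nat.Partition j) ≤ q j := by
    intro j hj
    by_cases h7 : j = 7
    · subst h7
      have h₅ : Fintype.card (Nat.Partition 5) ≤ 8 :=
        (Nat.Partition.card_le_fib 5).trans (by decide)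
      have h₆ : Fintype.card (Nat.Partition 6) ≤ 13 :=
        (Nat.Partition.card_le_fib 6).trans (by decide)
      have h₇ : Fintype.card (Nat.Partition 7) <
          Fintype.card (Nat.Partition 6) + Fintype.card (Nat.Partition 5) :=
        Nat.Partition.card_add_two_lt (show 3 ≤ 5 by norm_num)
      show _ ≤ 20
      omega
    · simpa [q, h7] using Nat.Partition.card_le_fib j
  calc kTuples 2 7
      = ∑ x ∈ antidiagonal 7,
          Fintype.card (Nat.Partition x.1) * Fintype.card (Nat.Partition x.2) := by
        rw [kTuples_succ]; simp only [kTuples_one]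
    _ ≤ ∑ x ∈ antidiagonal 7, q x.1 * q x.2 :=
        sum_le_sum fun x hx => Nat.mul_le_mul
          (hq _ (HasAntidiagonal.antidiagonal.fst_le hx))
          (hq _ (HasAntidiagonal.antidiagonal.snd_le hx))
    _ = 2 ^ 7 := by decide

theorem kTuples_le_pow_of_three_le {s : ℕ} (hs : 3 ≤ s) (t : ℕ) : kTuples s t ≤ s ^ t := by
  induction s, hs using Nat.le_induction generalizing t with
  | base =>
    have hk₂ := kTuples_succ_le_fibConv kTuples_one_le
    exact (kTuples_succ_le_fibConv hk₂ t).trans (fibConv_fibConv_fib_le_three_pow t)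
  | succ s hs ih =>
    exact (kTuples_succ_le_fibConv ih t).trans (fibConv_pow_le_pow (by omega) t)

theorem kTuples_le_pow_general (s t : ℕ) (hs : 2 ≤ s)
    (h : ¬ (s = 2 ∧ t ≤ 6)) : kTuples s t ≤ s ^ t := by
  obtain rfl | hs₃ : s = 2 ∨ 3 ≤ s := by omega
  · obtain rfl | ht : t = 7 ∨ 8 ≤ t := by omega
    · exact kTuples_two_seven_le
    · exact kTuples_two_le_two_pow ht
  · exact kTuples_le_pow_of_three_le hs₃ t

theorem kTuples_le_pow (s t : ℕ) (hs : 2 ≤ s) (ht : 1 ≤ t)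
    (h : ¬ (s = 2 ∧ t ≤ 6)) : kTuples s t ≤ s ^ t :=
  kTuples_le_pow_general s t hs h
end

section
/- For every integer n ≥ 1, the number of ordered pairs (α, β) of integer partitions with |α| + |β| = n such that β has distinct parts is at most 2^n. -/
namespace CardPairsAux

/-- A pair of multisets representing `(α, β)` with positive parts, `β` nodup,
total sum `n`. -/
def Ok (n : ℕ) (p : Multiset ℕ × Multiset ℕ) : Prop :=
  (∀ x ∈ p.1, 0 < x) ∧ (∀ x ∈ p.2, 0 < x) ∧ p.2.Nodup ∧ p.1.sum + p.2.sum = n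

abbrev Lv (n : ℕ) := { p : Multiset ℕ × Multiset ℕ // Ok n p }

/-- minimum of a multiset of naturals (0 for the empty multiset). -/
def mmin (m : Multiset ℕ) : ℕ :=
  if h : m = 0 then 0 else
    m.toFinset.min' (by rwa [Multiset.toFinset_nonempty])

lemma mmin_mem {m : Multiset ℕ} (h : m ≠ 0) : mmin m ∈ m := by
  rw [mmin, dif_neg h]
  have := Finset.min'_mem m.toFinset (by rwa [Multiset.toFinset_nonempty])
  rwa [Multiset.mem_toFinset] at this

lemma mmin_le {m : Multiset ℕ} {x : ℕ} (hx : x ∈ m) : mmin m ≤ x := by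
  have h : m ≠ 0 := by rintro rfl; simp at hx
  rw [mmin, dif_neg h]
  exact Finset.min'_le _ _ (Multiset.mem_toFinset.mpr hx)

lemma mmin_eq {m : Multiset ℕ} {k : ℕ} (h1 : k ∈ m) (h2 : ∀ x ∈ m, k ≤ x) :
    mmin m = k := by
  have h : m ≠ 0 := by rintro rfl; simp at h1
  exact le_antisymm (mmin_le h1) (h2 _ (mmin_mem h))

/-- forward map (on raw data). -/
def valF (p : Multiset ℕ × Multiset ℕ) : (Multiset ℕ × Multiset ℕ) × Bool :=
  if 1 ∈ p.1 then ((p.1.erase 1, p.2), false)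
  else if p.1 ≠ 0 then
    (((mmin p.1 - 1) ::ₘ p.1.erase (mmin p.1), p.2), true)
  else if 1 ∈ p.2 then ((0, p.2.erase 1), true)
  else if 2 ∈ p.2 then ((0, 1 ::ₘ p.2.erase 2), true)
  else ((Multiset.replicate (mmin p.2 - 1) 1, p.2.erase (mmin p.2)), true)

/-- backward map (left inverse on raw data). -/
def valH (q : (Multiset ℕ × Multiset ℕ) × Bool) : Multiset ℕ × Multiset ℕ :=
  if q.2 = false then (1 ::ₘ q.1.1, q.1.2)
  else if q.1.1 = 0 then
    (if 1 ∈ q.1.2 then (0, 2 ::ₘ q.1.2.erase 1) else (0, 1 ::ₘ q.1.2))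
  else if 2 ≤ q.1.1.count 1 then (0, (Multiset.card q.1.1 + 1) ::ₘ q.1.2)
  else ((mmin q.1.1 + 1) ::ₘ q.1.1.erase (mmin q.1.1), q.1.2)

section cases
variable {α β : Multiset ℕ}

lemma valF_case1 (h1 : 1 ∈ α) : valF (α, β) = ((α.erase 1, β), false) := by
  simp [valF, h1]

lemma valF_case2 (h1 : 1 ∉ α) (h2 : α ≠ 0) :
    valF (α, β) = (((mmin α - 1) ::ₘ α.erase (mmin α), β), true) := by
  simp [valF, h1, h2]

lemma valF_case3 (h3 : 1 ∈ β) : valF (0, β) = ((0, β.erase 1), true) := by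
  simp [valF, h3]

lemma valF_case4 (h3 : 1 ∉ β) (h4 : 2 ∈ β) :
    valF (0, β) = ((0, 1 ::ₘ β.erase 2), true) := by
  simp [valF, h3, h4]

lemma valF_case5 (h3 : 1 ∉ β) (h4 : 2 ∉ β) :
    valF (0, β) = ((Multiset.replicate (mmin β - 1) 1, β.erase (mmin β)), true) := by
  simp [valF, h3, h4]

end cases

lemma ok_valF {n : ℕ} {p : Multiset ℕ × Multiset ℕ} (h : Ok (n + 1) p) :
    Ok n (valF p).1 := by
  obtain ⟨α, β⟩ := p
  obtain ⟨hpa, hpb, hnd, hsum⟩ := h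
  simp only at hpa hpb hnd hsum
  by_cases h1 : 1 ∈ α
  · have hc : 1 ::ₘ α.erase 1 = α := Multiset.cons_erase h1
    have hs : 1 + (α.erase 1).sum = α.sum := by rw [← Multiset.sum_cons, hc]
    rw [valF_case1 h1]
    exact ⟨fun x hx => hpa x (Multiset.mem_of_mem_erase hx), hpb, hnd, by
      simp only; omega⟩
  · by_cases h2 : α = 0
    · subst h2
      simp only [Multiset.sum_zero, zero_add] at hsum
      by_cases h3 : 1 ∈ β
      · have hc : 1 ::ₘ β.erase 1 = β := Multiset.cons_erase h3
        have hs : 1 + (β.erase 1).sum = β.sum := by rw [← Multiset.sum_cons, hc]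
        rw [valF_case3 h3]
        exact ⟨by simp, fun x hx => hpb x (Multiset.mem_of_mem_erase hx),
          hnd.erase 1, by simp only [Multiset.sum_zero, zero_add]; omega⟩
      · by_cases h4 : 2 ∈ β
        · have hc : 2 ::ₘ β.erase 2 = β := Multiset.cons_erase h4
          have hs : 2 + (β.erase 2).sum = β.sum := by rw [← Multiset.sum_cons, hc]
          rw [valF_case4 h3 h4]
          refine ⟨by simp, ?_, ?_, ?_⟩
          · intro x hx
            rcases Multiset.mem_cons.mp hx with h | h
            · omega
            · exact hpb x (Multiset.mem_of_mem_erase h)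
          · exact Multiset.nodup_cons.mpr
              ⟨fun hx => h3 (Multiset.mem_of_mem_erase hx), hnd.erase 2⟩
          · simp only [Multiset.sum_cons, Multiset.sum_zero, zero_add]
            omega
        · have hb : β ≠ 0 := by rintro rfl; simp at hsum
          have hm : mmin β ∈ β := mmin_mem hb
          have hm1 : 0 < mmin β := hpb _ hm
          have hm2 : mmin β ≠ 1 := fun e => h3 (e ▸ hm)
          have hm3 : mmin β ≠ 2 := fun e => h4 (e ▸ hm)
          have hc : mmin β ::ₘ β.erase (mmin β) = β := Multiset.cons_erase hm
          have hs : mmin β + (β.erase (mmin β)).sum = β.sum := by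
            rw [← Multiset.sum_cons, hc]
          rw [valF_case5 h3 h4]
          refine ⟨?_, fun x hx => hpb x (Multiset.mem_of_mem_erase hx),
            hnd.erase _, ?_⟩
          · intro x hx
            have := Multiset.eq_of_mem_replicate hx
            omega
          · simp only [Multiset.sum_replicate, smul_eq_mul, mul_one]
            omega
    · have hm : mmin α ∈ α := mmin_mem h2
      have hm1 : 0 < mmin α := hpa _ hm
      have hm2 : mmin α ≠ 1 := fun e => h1 (e ▸ hm)
      have hc : mmin α ::ₘ α.erase (mmin α) = α := Multiset.cons_erase hm
      have hs : mmin α + (α.erase (mmin α)).sum = α.sum := by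
        rw [← Multiset.sum_cons, hc]
      rw [valF_case2 h1 h2]
      refine ⟨?_, hpb, hnd, ?_⟩
      · intro x hx
        rcases Multiset.mem_cons.mp hx with h | h
        · omega
        · exact hpa x (Multiset.mem_of_mem_erase h)
      · simp only [Multiset.sum_cons]
        omega

lemma key {n : ℕ} {p : Multiset ℕ × Multiset ℕ} (h : Ok (n + 1) p) :
    valH (valF p) = p := by
  obtain ⟨α, β⟩ := p
  obtain ⟨hpa, hpb, hnd, hsum⟩ := h
  simp only at hpa hpb hnd hsum
  by_cases h1 : 1 ∈ α
  · rw [valF_case1 h1]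
    simp [valH, Multiset.cons_erase h1]
  · by_cases h2 : α = 0
    · subst h2
      simp only [Multiset.sum_zero, zero_add] at hsum
      by_cases h3 : 1 ∈ β
      · have hcount : β.count 1 ≤ 1 := Multiset.nodup_iff_count_le_one.mp hnd 1
        have hnm : 1 ∉ β.erase 1 := by
          rw [← Multiset.count_eq_zero, Multiset.count_erase_self]
          omega
        rw [valF_case3 h3]
        simp [valH, hnm, Multiset.cons_erase h3]
      · by_cases h4 : 2 ∈ β
        · rw [valF_case4 h3 h4]
          simp [valH, Multiset.cons_erase h4]
        · have hb : β ≠ 0 := by rintro rfl; simp at hsum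
          have hm : mmin β ∈ β := mmin_mem hb
          have hm1 : 0 < mmin β := hpb _ hm
          have hm2 : mmin β ≠ 1 := fun e => h3 (e ▸ hm)
          have hm3 : mmin β ≠ 2 := fun e => h4 (e ▸ hm)
          have hrep : Multiset.replicate (mmin β - 1) 1 ≠ 0 := by
            intro h
            have := congrArg Multiset.card h
            simp only [Multiset.card_replicate, Multiset.card_zero] at this
            omega
          have h22 : 2 ≤ mmin β - 1 := by omega
          have h11 : mmin β - 1 + 1 = mmin β := by omega
          rw [valF_case5 h3 h4]
          simp [valH, hrep, Multiset.count_replicate_self, h22,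
            Multiset.card_replicate, h11, Multiset.cons_erase hm]
    · have hm : mmin α ∈ α := mmin_mem h2
      have hm1 : 0 < mmin α := hpa _ hm
      have hm2 : mmin α ≠ 1 := fun e => h1 (e ▸ hm)
      have h2m : 2 ≤ mmin α := by omega
      have hcnt : ¬ 2 ≤ ((mmin α - 1) ::ₘ α.erase (mmin α)).count 1 := by
        have he : (α.erase (mmin α)).count 1 = 0 := by
          rw [Multiset.count_eq_zero]
          exact fun hx => h1 (Multiset.mem_of_mem_erase hx)
        rw [Multiset.count_cons, he]
        split <;> omega
      have hmin' : mmin ((mmin α - 1) ::ₘ α.erase (mmin α)) = mmin α - 1 := by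
        apply mmin_eq (Multiset.mem_cons_self _ _)
        intro x hx
        rcases Multiset.mem_cons.mp hx with h | h
        · omega
        · have := mmin_le (Multiset.mem_of_mem_erase h)
          omega
      have h11 : mmin α - 1 + 1 = mmin α := by omega
      rw [valF_case2 h1 h2]
      simp [valH, hcnt, hmin', h11, Multiset.cons_erase hm]

/-- The step injection. -/
def Fmap {n : ℕ} (p : Lv (n + 1)) : Lv n × Bool :=
  (⟨(valF p.val).1, ok_valF p.prop⟩, (valF p.val).2)

lemma Fmap_inj {n : ℕ} : Function.Injective (Fmap (n := n)) := by
  intro p q h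
  have h1 : (valF p.val).1 = (valF q.val).1 :=
    congrArg (fun x => (x.1 : Multiset ℕ × Multiset ℕ)) h
  have h2 : (valF p.val).2 = (valF q.val).2 := congrArg (fun x => x.2) h
  have h3 : valF p.val = valF q.val := Prod.ext h1 h2
  have hk := key p.prop
  rw [h3, key q.prop] at hk
  exact Subtype.ext hk.symm

lemma lv_step (n : ℕ) [Finite (Lv n)] :
    Finite (Lv (n + 1)) ∧ Nat.card (Lv (n + 1)) ≤ 2 * Nat.card (Lv n) := by
  have hfin : Finite (Lv (n + 1)) := Finite.of_injective (Fmap (n := n)) Fmap_inj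
  refine ⟨hfin, ?_⟩
  have := Nat.card_le_card_of_injective (Fmap (n := n)) Fmap_inj
  rwa [Nat.card_prod, Nat.card_eq_fintype_card (α := Bool), Fintype.card_bool,
    mul_comm] at this

lemma lv_zero_subsingleton : Subsingleton (Lv 0) := by
  constructor
  have hz : ∀ m : Multiset ℕ, (∀ x ∈ m, 0 < x) → m.sum = 0 → m = 0 := by
    intro m hm hs
    by_contra h
    obtain ⟨a, ha⟩ := Multiset.exists_mem_of_ne_zero h
    have h1 : 0 < a := hm a ha
    have h2 : a ≤ m.sum := Multiset.single_le_sum (fun x hx => (hm x hx).le) _ ha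
    omega
  rintro ⟨⟨α, β⟩, hpa, hpb, hnd, hsum⟩ ⟨⟨α', β'⟩, hpa', hpb', hnd', hsum'⟩
  simp only at hpa hpb hsum hpa' hpb' hsum'
  have hα : α = 0 := hz α hpa (by omega)
  have hβ : β = 0 := hz β hpb (by omega)
  have hα' : α' = 0 := hz α' hpa' (by omega)
  have hβ' : β' = 0 := hz β' hpb' (by omega)
  subst hα hβ hα' hβ'
  rfl

lemma lv_bound (n : ℕ) : Finite (Lv n) ∧ Nat.card (Lv n) ≤ 2 ^ n := by
  induction n with
  | zero =>
    haveI := lv_zero_subsingleton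
    have e0 : Lv 0 := ⟨(0, 0), by simp [Ok]⟩
    refine ⟨Finite.of_subsingleton, ?_⟩
    rw [Nat.card_of_subsingleton e0]
    norm_num
  | succ n ih =>
    obtain ⟨hfin, hcard⟩ := ih
    obtain ⟨hfin', hcard'⟩ := lv_step n
    refine ⟨hfin', ?_⟩
    calc Nat.card (Lv (n + 1)) ≤ 2 * Nat.card (Lv n) := hcard'
      _ ≤ 2 * 2 ^ n := by omega
      _ = 2 ^ (n + 1) := by ring

def lvEquiv (n : ℕ) :
    { P : (Σ a : ℕ, Nat.Partition a) × (Σ b : ℕ, Nat.Partition b) //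
      P.1.1 + P.2.1 = n ∧ P.2.2.parts.Nodup } ≃ Lv n where
  toFun P := ⟨(P.1.1.2.parts, P.1.2.2.parts),
    fun _ hx => P.1.1.2.parts_pos hx, fun _ hx => P.1.2.2.parts_pos hx,
    P.2.2, by rw [P.1.1.2.parts_sum, P.1.2.2.parts_sum]; exact P.2.1⟩
  invFun p := ⟨(⟨p.1.1.sum, ⟨p.1.1, fun hx => p.2.1 _ hx, rfl⟩⟩,
    ⟨p.1.2.sum, ⟨p.1.2, fun hx => p.2.2.1 _ hx, rfl⟩⟩),
    p.2.2.2.2, p.2.2.2.1⟩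
  left_inv := by
    rintro ⟨⟨⟨a, ⟨pa, hpa, hsa⟩⟩, ⟨b, ⟨pb, hpb, hsb⟩⟩⟩, h1, h2⟩
    subst hsa hsb
    rfl
  right_inv := by
    rintro ⟨⟨α, β⟩, h⟩
    rfl

end CardPairsAux

/-- The number of ordered pairs `(α, β)` of integer partitions with `|α| + |β| = n`
such that `β` has distinct parts is at most `2 ^ n`. -/
theorem card_pairs_distinct_le_two_pow (n : ℕ) (hn : 1 ≤ n) :
    Nat.card { P : (Σ a : ℕ, Nat.Partition a) × (Σ b : ℕ, Nat.Partition b) //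
      P.1.1 + P.2.1 = n ∧ P.2.2.parts.Nodup } ≤ 2 ^ n := by
  rw [Nat.card_congr (CardPairsAux.lvEquiv n)]
  exact (CardPairsAux.lv_bound n).2
end

section
/- For every integer n ≥ 1, the number of ordered pairs (α, β) of integer partitions with 2|α| + |β| = 2n + 1 such that β has distinct parts all of which are odd is at most 2^n. -/
namespace CardPairsAux

lemma sup_mem {s : Multiset ℕ} (h : s ≠ 0) : s.sup ∈ s := by
  induction s using Multiset.induction with
  | empty => exact absurd rfl h
  | cons a t ih =>
    rw [Multiset.sup_cons]
    rcases eq_or_ne t 0 with rfl | ht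
    · simp
    · rcases le_total a t.sup with h' | h'
      · rw [sup_eq_right.mpr h']
        exact Multiset.mem_cons_of_mem (ih ht)
      · rw [sup_eq_left.mpr h']
        exact Multiset.mem_cons_self a t

def psiRaw (α β : Multiset ℕ) : Bool × (Multiset ℕ × Multiset ℕ) :=
  if 1 ∈ α then (false, (α.erase 1, β))
  else if β.sup = 1 then
    if α.sup = 2 ∨ α.sup % 2 = 1 then
      (true, (α.erase α.sup + Multiset.replicate (α.sup - 1) 1, {1}))
    else (true, (α.erase α.sup + Multiset.replicate (α.sup - 2) 1, {3}))
  else if β.sup - 2 ∈ β then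
    (true, (α + Multiset.replicate (β.sup - 2) 1, (β.erase β.sup).erase (β.sup - 2)))
  else (true, (α, (β.sup - 2) ::ₘ β.erase β.sup))

def xiRaw : Bool × (Multiset ℕ × Multiset ℕ) → Multiset ℕ × Multiset ℕ
  | (false, (γ, δ)) => (1 ::ₘ γ, δ)
  | (true, (γ, δ)) =>
    if γ.count 1 = 0 then (γ, (δ.sup + 2) ::ₘ δ.erase δ.sup)
    else if γ.count 1 % 2 = 1 ∧ γ.count 1 ∉ δ then
      (γ.filter (· ≠ 1), (γ.count 1 + 2) ::ₘ γ.count 1 ::ₘ δ)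
    else if δ = {3} then ((γ.count 1 + 2) ::ₘ γ.filter (· ≠ 1), {1})
    else if γ.count 1 = 1 then (2 ::ₘ γ.filter (· ≠ 1), {1})
    else ((γ.count 1 + 1) ::ₘ γ.filter (· ≠ 1), {1})

theorem psi_spec (m : ℕ) (hm : m % 2 = 1) (α β : Multiset ℕ)
    (hα : ∀ x ∈ α, 0 < x) (hβn : β.Nodup) (hβo : ∀ x ∈ β, Odd x)
    (hw : 2 * α.sum + β.sum = m + 2) :
    (∀ x ∈ (psiRaw α β).2.1, 0 < x) ∧ (psiRaw α β).2.2.Nodup ∧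
      (∀ x ∈ (psiRaw α β).2.2, Odd x) ∧
      2 * (psiRaw α β).2.1.sum + (psiRaw α β).2.2.sum = m ∧
      xiRaw (psiRaw α β) = (α, β) := by
  by_cases h1 : 1 ∈ α
  · -- case c0 : remove a part 1 from α
    rw [psiRaw, if_pos h1]
    dsimp only
    have hc : (1 : ℕ) ::ₘ α.erase 1 = α := Multiset.cons_erase h1
    have hsum : α.sum = 1 + (α.erase 1).sum := by
      conv_lhs => rw [← hc]
      rw [Multiset.sum_cons]
    refine ⟨fun x hx => hα x (Multiset.mem_of_mem_erase hx), hβn, hβo, by omega, ?_⟩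
    show ((1 : ℕ) ::ₘ α.erase 1, β) = (α, β)
    rw [hc]
  · have hcα1 : α.count 1 = 0 := Multiset.count_eq_zero.mpr h1
    have hαne1 : ∀ x ∈ α, x ≠ 1 := fun x hx e => h1 (e ▸ hx)
    have hβ0 : β ≠ 0 := by
      intro h
      rw [h] at hw
      simp only [Multiset.sum_zero] at hw
      omega
    have hLmem : β.sup ∈ β := sup_mem hβ0
    have hLodd : β.sup % 2 = 1 := Nat.odd_iff.mp (hβo _ hLmem)
    by_cases hL : β.sup = 1
    · -- case c1 : β = {1}
      have h1β : (1 : ℕ) ∈ β := hL ▸ hLmem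
      have hβ1 : β = {1} := by
        have her : β.erase 1 = 0 := by
          by_contra hne
          obtain ⟨y, hy⟩ := Multiset.exists_mem_of_ne_zero hne
          have hyβ : y ∈ β := Multiset.mem_of_mem_erase hy
          have hy1 : y ≤ β.sup := Multiset.le_sup hyβ
          have hyo : y % 2 = 1 := Nat.odd_iff.mp (hβo y hyβ)
          have : y = 1 := by omega
          exact hβn.notMem_erase (this ▸ hy)
        have := Multiset.cons_erase h1β
        rw [her] at this
        exact this.symm
      have hβsum : β.sum = 1 := by rw [hβ1]; simp
      have hα0 : α ≠ 0 := by
        intro h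
        rw [h] at hw
        simp only [Multiset.sum_zero] at hw
        omega
      have hsmem : α.sup ∈ α := sup_mem hα0
      have hs2 : 2 ≤ α.sup := by
        have h1s := hα _ hsmem
        have h2s : α.sup ≠ 1 := fun h => h1 (h ▸ hsmem)
        omega
      have hserase : α.sup ::ₘ α.erase α.sup = α := Multiset.cons_erase hsmem
      have hsum' : α.sum = α.sup + (α.erase α.sup).sum := by
        conv_lhs => rw [← hserase]
        rw [Multiset.sum_cons]
      have hec1 : (α.erase α.sup).count 1 = 0 :=
        Nat.le_zero.mp (hcα1 ▸ Multiset.count_le_of_le 1 (Multiset.erase_le _ _))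
      have hfe : Multiset.filter (· ≠ 1) (α.erase α.sup) = α.erase α.sup :=
        Multiset.filter_eq_self.mpr
          (fun x hx e => (Multiset.count_eq_zero.mp hec1) (e ▸ hx))
      have hfr : ∀ k : ℕ, Multiset.filter (· ≠ 1) (Multiset.replicate k 1) = 0 :=
        fun k => Multiset.filter_eq_nil.mpr
          (fun x hx hne => hne (Multiset.eq_of_mem_replicate hx))
      have hfil : ∀ k : ℕ,
          (α.erase α.sup + Multiset.replicate k 1).filter (· ≠ 1) = α.erase α.sup := by
        intro k
        rw [Multiset.filter_add, hfe, hfr, add_zero]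
      have hcnt : ∀ k : ℕ,
          (α.erase α.sup + Multiset.replicate k 1).count 1 = k := by
        intro k
        rw [Multiset.count_add, hec1, Multiset.count_replicate, if_pos rfl, zero_add]
      by_cases hb : α.sup = 2 ∨ α.sup % 2 = 1
      · -- c1 branch 1
        rw [psiRaw, if_neg h1, if_pos hL, if_pos hb]
        dsimp only
        refine ⟨?_, ?_, ?_, ?_, ?_⟩
        · intro x hx
          rcases Multiset.mem_add.mp hx with hx | hx
          · exact hα x (Multiset.mem_of_mem_erase hx)
          · rw [Multiset.eq_of_mem_replicate hx]; exact one_pos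
        · exact Multiset.nodup_singleton 1
        · intro x hx
          rw [Multiset.mem_singleton.mp hx]
          exact ⟨0, rfl⟩
        · rw [Multiset.sum_add, Multiset.sum_replicate, Multiset.sum_singleton]
          simp only [smul_eq_mul, mul_one]
          omega
        · show xiRaw (true, (α.erase α.sup + Multiset.replicate (α.sup - 1) 1, {1})) = (α, β)
          rw [xiRaw]
          rw [hcnt (α.sup - 1)]
          rw [if_neg (by omega)]
          have hnot2 : ¬((α.sup - 1) % 2 = 1 ∧ (α.sup - 1) ∉ ({1} : Multiset ℕ)) := by
            rcases hb with h2 | hodd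
            · intro ⟨_, hnm⟩
              exact hnm (by rw [h2]; simp)
            · intro ⟨ho, _⟩
              omega
          rw [if_neg hnot2]
          rw [if_neg (by simp : ¬({1} : Multiset ℕ) = {3})]
          by_cases ht1 : α.sup - 1 = 1
          · rw [if_pos ht1, hfil]
            have hs2' : α.sup = 2 := by omega
            rw [hβ1, Prod.mk.injEq]
            constructor
            · rw [← hs2', hserase]
            · rfl
          · rw [if_neg ht1, hfil]
            have : α.sup - 1 + 1 = α.sup := by omega
            rw [this, hserase, hβ1]
      · -- c1 branch 2
        rw [psiRaw, if_neg h1, if_pos hL, if_neg hb]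
        dsimp only
        push_neg at hb
        have hs4 : 4 ≤ α.sup := by omega
        refine ⟨?_, ?_, ?_, ?_, ?_⟩
        · intro x hx
          rcases Multiset.mem_add.mp hx with hx | hx
          · exact hα x (Multiset.mem_of_mem_erase hx)
          · rw [Multiset.eq_of_mem_replicate hx]; exact one_pos
        · exact Multiset.nodup_singleton 3
        · intro x hx
          rw [Multiset.mem_singleton.mp hx]
          exact ⟨1, rfl⟩
        · rw [Multiset.sum_add, Multiset.sum_replicate, Multiset.sum_singleton]
          simp only [smul_eq_mul, mul_one]
          omega
        · show xiRaw (true, (α.erase α.sup + Multiset.replicate (α.sup - 2) 1, {3})) = (α, β)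
          rw [xiRaw]
          rw [hcnt (α.sup - 2)]
          rw [if_neg (by omega)]
          rw [if_neg (by
            intro ⟨ho, _⟩
            omega)]
          rw [if_pos rfl, hfil]
          have : α.sup - 2 + 2 = α.sup := by omega
          rw [this, hserase, hβ1]
    · -- cases c2, c3 : β.sup ≥ 3
      have hL3 : 3 ≤ β.sup := by omega
      have hLm2odd : (β.sup - 2) % 2 = 1 := by omega
      have hLerase : β.sup ::ₘ β.erase β.sup = β := Multiset.cons_erase hLmem
      have hLnoter : β.sup ∉ β.erase β.sup := hβn.notMem_erase
      have hsumβ : β.sum = β.sup + (β.erase β.sup).sum := by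
        conv_lhs => rw [← hLerase]
        rw [Multiset.sum_cons]
      by_cases hmem : β.sup - 2 ∈ β
      · -- case c3
        rw [psiRaw, if_neg h1, if_neg hL, if_pos hmem]
        dsimp only
        have hm2ne : β.sup - 2 ≠ β.sup := by omega
        have hmem' : β.sup - 2 ∈ β.erase β.sup := (Multiset.mem_erase_of_ne hm2ne).mpr hmem
        have h2er : (β.sup - 2) ::ₘ (β.erase β.sup).erase (β.sup - 2) = β.erase β.sup :=
          Multiset.cons_erase hmem'
        have hsumδ : (β.erase β.sup).sum =
            (β.sup - 2) + ((β.erase β.sup).erase (β.sup - 2)).sum := by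
          conv_lhs => rw [← h2er]
          rw [Multiset.sum_cons]
        have hmemδ : ∀ x ∈ (β.erase β.sup).erase (β.sup - 2), x ∈ β :=
          fun x hx => Multiset.mem_of_mem_erase (Multiset.mem_of_mem_erase hx)
        refine ⟨?_, (hβn.erase _).erase _, fun x hx => hβo x (hmemδ x hx), ?_, ?_⟩
        · intro x hx
          rcases Multiset.mem_add.mp hx with hx | hx
          · exact hα x hx
          · rw [Multiset.eq_of_mem_replicate hx]; exact one_pos
        · rw [Multiset.sum_add, Multiset.sum_replicate]
          simp only [smul_eq_mul, mul_one]
          omega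
        · show xiRaw (true, (α + Multiset.replicate (β.sup - 2) 1,
              (β.erase β.sup).erase (β.sup - 2))) = (α, β)
          rw [xiRaw]
          have hcnt' : (α + Multiset.replicate (β.sup - 2) 1).count 1 = β.sup - 2 := by
            rw [Multiset.count_add, hcα1, Multiset.count_replicate, if_pos rfl, zero_add]
          rw [hcnt']
          rw [if_neg (by omega)]
          have hnotin : β.sup - 2 ∉ (β.erase β.sup).erase (β.sup - 2) := by
            intro hin
            have hc1 : β.count (β.sup - 2) ≤ 1 := Multiset.nodup_iff_count_le_one.mp hβn _
            have hc2 : (β.erase β.sup).count (β.sup - 2) = β.count (β.sup - 2) :=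
              Multiset.count_erase_of_ne hm2ne β
            have hc3 : ((β.erase β.sup).erase (β.sup - 2)).count (β.sup - 2) =
                (β.erase β.sup).count (β.sup - 2) - 1 := Multiset.count_erase_self _ _
            have := Multiset.count_pos.mpr hin
            omega
          rw [if_pos ⟨hLm2odd, hnotin⟩]
          have hfe : Multiset.filter (· ≠ 1) α = α :=
            Multiset.filter_eq_self.mpr hαne1
          have hfr : Multiset.filter (· ≠ 1) (Multiset.replicate (β.sup - 2) 1) = 0 :=
            Multiset.filter_eq_nil.mpr
              (fun x hx hne => hne (Multiset.eq_of_mem_replicate hx))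
          have hfl : (α + Multiset.replicate (β.sup - 2) 1).filter (· ≠ 1) = α := by
            rw [Multiset.filter_add, hfe, hfr, add_zero]
          rw [hfl]
          have : β.sup - 2 + 2 = β.sup := by omega
          rw [this, h2er, hLerase]
      · -- case c2
        rw [psiRaw, if_neg h1, if_neg hL, if_neg hmem]
        dsimp only
        have hnoter2 : β.sup - 2 ∉ β.erase β.sup :=
          fun h => hmem (Multiset.mem_of_mem_erase h)
        refine ⟨hα, Multiset.nodup_cons.mpr ⟨hnoter2, hβn.erase _⟩, ?_, ?_, ?_⟩
        · intro x hx
          rcases Multiset.mem_cons.mp hx with rfl | hx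
          · exact Nat.odd_iff.mpr hLm2odd
          · exact hβo x (Multiset.mem_of_mem_erase hx)
        · rw [Multiset.sum_cons]
          omega
        · show xiRaw (true, (α, (β.sup - 2) ::ₘ β.erase β.sup)) = (α, β)
          rw [xiRaw]
          rw [hcα1, if_pos rfl]
          have hsup' : ((β.sup - 2) ::ₘ β.erase β.sup).sup = β.sup - 2 := by
            rw [Multiset.sup_cons]
            refine sup_eq_left.mpr (Multiset.sup_le.mpr fun x hx => ?_)
            have hxβ : x ∈ β := Multiset.mem_of_mem_erase hx
            have hx1 : x ≤ β.sup := Multiset.le_sup hxβ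
            have hx2 : x ≠ β.sup := fun e => hLnoter (e ▸ hx)
            have hx3 : x % 2 = 1 := Nat.odd_iff.mp (hβo x hxβ)
            omega
          rw [hsup']
          rw [Multiset.erase_cons_head]
          have : β.sup - 2 + 2 = β.sup := by omega
          rw [this, hLerase]


def PP (m : ℕ) : Type :=
  { q : Multiset ℕ × Multiset ℕ //
    (∀ x ∈ q.1, 0 < x) ∧ q.2.Nodup ∧ (∀ x ∈ q.2, Odd x) ∧ 2 * q.1.sum + q.2.sum = m }

/-- The lifted reduction map. -/
def psiPP {m : ℕ} (hm : m % 2 = 1) (x : PP (m + 2)) : Bool × PP m :=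
  ⟨(psiRaw x.val.1 x.val.2).1,
    ⟨(psiRaw x.val.1 x.val.2).2, by
      obtain ⟨h1, h2, h3, h4⟩ := x.prop
      obtain ⟨g1, g2, g3, g4, _⟩ := psi_spec m hm x.val.1 x.val.2 h1 h2 h3 h4
      exact ⟨g1, g2, g3, g4⟩⟩⟩

theorem psiPP_inj {m : ℕ} (hm : m % 2 = 1) : Function.Injective (psiPP hm) := by
  intro x y hxy
  obtain ⟨h1, h2, h3, h4⟩ := x.prop
  obtain ⟨k1, k2, k3, k4⟩ := y.prop
  have hx := (psi_spec m hm x.val.1 x.val.2 h1 h2 h3 h4).2.2.2.2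
  have hy := (psi_spec m hm y.val.1 y.val.2 k1 k2 k3 k4).2.2.2.2
  have heq : psiRaw x.val.1 x.val.2 = psiRaw y.val.1 y.val.2 := by
    have hb := congrArg Prod.fst hxy
    have hv := congrArg (fun p : Bool × PP m => (p.2 : PP m).val) hxy
    simp only [psiPP] at hb hv
    exact Prod.ext hb hv
  have h3' : (x.val.1, x.val.2) = (y.val.1, y.val.2) := by
    rw [← hx, ← hy, heq]
  exact Subtype.ext h3'

instance PP_one_subsingleton : Subsingleton (PP 1) := by
  constructor
  intro x y
  have key : ∀ z : PP 1, z.val = (0, {1}) := by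
    rintro ⟨⟨a, b⟩, h1, h2, h3, h4⟩
    simp only at h1 h2 h3 h4 ⊢
    have ha : a = 0 := by
      by_contra hne
      obtain ⟨u, hu⟩ := Multiset.exists_mem_of_ne_zero hne
      have h5 := h1 u hu
      have h6 := Multiset.single_le_sum (fun x hx => Nat.zero_le x) u hu
      omega
    have hb0 : b ≠ 0 := by
      intro h
      rw [ha, h] at h4
      simp at h4
    obtain ⟨u, hu⟩ := Multiset.exists_mem_of_ne_zero hb0
    obtain ⟨c, hc⟩ := Multiset.exists_cons_of_mem hu
    have hbsum : b.sum = 1 := by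
      rw [ha] at h4
      simpa using h4
    have husum : u + c.sum = 1 := by rw [hc] at hbsum; simpa [Multiset.sum_cons] using hbsum
    have hupos : 0 < u := (h3 u hu).pos
    have hu1 : u = 1 := by omega
    have hcsum : c.sum = 0 := by omega
    have hc0 : c = 0 := by
      by_contra hne
      obtain ⟨v, hv⟩ := Multiset.exists_mem_of_ne_zero hne
      have hvb : v ∈ b := by rw [hc]; exact Multiset.mem_cons_of_mem hv
      have := (h3 v hvb).pos
      have := Multiset.single_le_sum (fun x _ => Nat.zero_le x) v hv
      omega
    rw [ha, hc, hu1, hc0]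
    rfl
  apply Subtype.ext
  rw [key x, key y]

theorem PP_bound : ∀ k : ℕ, Finite (PP (2 * k + 1)) ∧ Nat.card (PP (2 * k + 1)) ≤ 2 ^ k := by
  intro k
  induction k with
  | zero =>
    have h01 : 2 * 0 + 1 = 1 := rfl
    rw [h01]
    refine ⟨Finite.of_subsingleton, ?_⟩
    rcases isEmpty_or_nonempty (PP 1) with he | hne
    · simp [Nat.card_of_isEmpty]
    · obtain ⟨a⟩ := hne
      rw [Nat.card_of_subsingleton a]
      norm_num
  | succ k ih =>
    obtain ⟨hfin, hcard⟩ := ih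
    have hm : (2 * k + 1) % 2 = 1 := by omega
    have hstep : 2 * (k + 1) + 1 = (2 * k + 1) + 2 := by ring
    rw [hstep]
    have : Finite (Bool × PP (2 * k + 1)) := by infer_instance
    have hfin' : Finite (PP ((2 * k + 1) + 2)) :=
      Finite.of_injective (psiPP hm) (psiPP_inj hm)
    refine ⟨hfin', ?_⟩
    calc Nat.card (PP ((2 * k + 1) + 2))
        ≤ Nat.card (Bool × PP (2 * k + 1)) :=
          Nat.card_le_card_of_injective (psiPP hm) (psiPP_inj hm)
      _ = 2 * Nat.card (PP (2 * k + 1)) := by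
          rw [Nat.card_prod]
          simp [Nat.card_eq_fintype_card]
      _ ≤ 2 * 2 ^ k := by omega
      _ = 2 ^ (k + 1) := by ring

def toPP (n : ℕ)
    (P : { P : (Σ a : ℕ, Nat.Partition a) × (Σ b : ℕ, Nat.Partition b) //
      2 * P.1.1 + P.2.1 = 2 * n + 1 ∧ P.2.2.parts.Nodup ∧
        ∀ x ∈ P.2.2.parts, Odd x }) : PP (2 * n + 1) :=
  ⟨(P.val.1.2.parts, P.val.2.2.parts),
    fun _ hx => P.val.1.2.parts_pos hx, P.prop.2.1, P.prop.2.2, by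
      simp only
      rw [P.val.1.2.parts_sum, P.val.2.2.parts_sum]
      exact P.prop.1⟩

lemma sigma_partition_eq {u v : Σ a : ℕ, Nat.Partition a} (h : u.2.parts = v.2.parts) :
    u = v := by
  obtain ⟨a, pa⟩ := u
  obtain ⟨b, pb⟩ := v
  simp only at h
  have hab : a = b := by rw [← pa.parts_sum, ← pb.parts_sum, h]
  subst hab
  exact congrArg (Sigma.mk a) (Nat.Partition.ext h)

theorem toPP_inj (n : ℕ) : Function.Injective (toPP n) := by
  intro x y h
  have hval := congrArg Subtype.val h
  simp only [toPP, Prod.mk.injEq] at hval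
  obtain ⟨h1, h2⟩ := hval
  apply Subtype.ext
  exact Prod.ext (sigma_partition_eq h1) (sigma_partition_eq h2)

end CardPairsAux

/-- The number of ordered pairs `(α, β)` of integer partitions with `2|α| + |β| = 2n + 1`
such that `β` has distinct parts all of which are odd is at most `2 ^ n`. -/
theorem card_pairs_distinct_odd_le_two_pow (n : ℕ) (hn : 1 ≤ n) :
    Nat.card { P : (Σ a : ℕ, Nat.Partition a) × (Σ b : ℕ, Nat.Partition b) //
      2 * P.1.1 + P.2.1 = 2 * n + 1 ∧ P.2.2.parts.Nodup ∧
        ∀ x ∈ P.2.2.parts, Odd x } ≤ 2 ^ n := by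
  classical
  obtain ⟨hfin, hcard⟩ := CardPairsAux.PP_bound n
  calc Nat.card _ ≤ Nat.card (CardPairsAux.PP (2 * n + 1)) :=
        Nat.card_le_card_of_injective _ (CardPairsAux.toPP_inj n)
    _ ≤ 2 ^ n := hcard
end

section
/- Let p ≥ 3 be a prime and w ≥ p an integer. Then 2·k(p−1, w) < p^w. -/
open Finset

def tupleSumEqEquivSigma (β : ℕ → Type*) (s t : ℕ) :
    {f : Fin s → Σ n, β n // ∑ i, (f i).1 = t} ≃
      Σ g : Nat.antidiagonalTuple s t, ∀ i, β ((g : Fin s → ℕ) i) where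
  toFun f := ⟨⟨fun i => (f.1 i).1, Nat.mem_antidiagonalTuple.2 f.2⟩, fun i => (f.1 i).2⟩
  invFun g := ⟨fun i => ⟨g.1.1 i, g.2 i⟩, Nat.mem_antidiagonalTuple.1 g.1.2⟩
  left_inv _ := rfl
  right_inv _ := rfl

theorem natCard_tupleSumEq (β : ℕ → Type*) [∀ n, Finite (β n)] (s t : ℕ) :
    Nat.card {f : Fin s → Σ n, β n // ∑ i, (f i).1 = t} =
      ∑ g ∈ Nat.antidiagonalTuple s t, ∏ i, Nat.card (β (g i)) := by
  rw [Nat.card_congr (tupleSumEqEquivSigma β s t), Nat.card_sigma]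
  simp only [Nat.card_pi]
  exact sum_coe_sort (Nat.antidiagonalTuple s t) fun g => ∏ i, Nat.card (β (g i))

theorem Finset.Nat.card_antidiagonalTuple (s t : ℕ) :
    #(Nat.antidiagonalTuple s t) = (s + t - 1).choose t := by
  rw [← Fintype.card_coe, Fintype.card_congr ((Sym.equivNatSumOfFintype (Fin s) t).trans
    (Equiv.subtypeEquivRight fun _ => Nat.mem_antidiagonalTuple.symm)).symm,
    Sym.card_sym_eq_choose, Fintype.card_fin]

theorem Nat.Partition.natCard_le (n : ℕ) : Nat.card (Nat.Partition n) ≤ 2 ^ (n - 1) := by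
  rw [Nat.card_eq_fintype_card, ← composition_card]
  exact Fintype.card_le_of_surjective _ Nat.Partition.ofComposition_surj

theorem Finset.sum_tsub_one_le {ι : Type*} (S : Finset ι) (f : ι → ℕ) :
    ∑ i ∈ S, (f i - 1) ≤ (∑ i ∈ S, f i) - 1 := by
  classical
  induction S using Finset.induction_on with
  | empty => simp
  | insert a S ha ih => rw [sum_insert ha, sum_insert ha]; omega

theorem kTuples_le_sum (s t : ℕ) :
    kTuples s t ≤ ∑ g ∈ Nat.antidiagonalTuple s t, 2 ^ ∑ i, (g i - 1) := by
  rw [kTuples, natCard_tupleSumEq]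
  gcongr with g
  rw [← prod_pow_eq_pow_sum]
  gcongr
  exact Nat.Partition.natCard_le _

theorem kTuples_le (s t : ℕ) : kTuples s t ≤ (s + t - 1).choose t * 2 ^ (t - 1) := by
  calc kTuples s t ≤ ∑ g ∈ Nat.antidiagonalTuple s t, 2 ^ ∑ i, (g i - 1) :=
        kTuples_le_sum s t
    _ ≤ ∑ _g ∈ Nat.antidiagonalTuple s t, 2 ^ (t - 1) := by
      gcongr with g hg
      · norm_num
      · rw [← (Nat.mem_antidiagonalTuple.1 hg)]
        exact sum_tsub_one_le _ _
    _ = (s + t - 1).choose t * 2 ^ (t - 1) := by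
      rw [sum_const, smul_eq_mul, Finset.Nat.card_antidiagonalTuple]

theorem two_mul_pow_le_succ_pow {n : ℕ} (hn : n ≠ 0) : 2 * n ^ n ≤ (n + 1) ^ n := by
  have h := pow_add_mul_le_add_pow (a := n) (b := 1) (Nat.zero_le _) (by positivity) n
  rwa [mul_one, Nat.cast_id, mul_pow_sub_one hn, ← two_mul] at h

theorem choose_mul_two_pow_lt_pow_succ {s w : ℕ} (hs : 1 ≤ s) (hw : 1 ≤ w)
    (h : (s + w - 1).choose w * 2 ^ w < (s + 1) ^ w) :
    (s + w).choose (w + 1) * 2 ^ (w + 1) < (s + 1) ^ (w + 1) := by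
  have pascal : (s + w) * (s + w - 1).choose w = (s + w).choose (w + 1) * (w + 1) := by
    simpa [Nat.sub_add_cancel (by omega : 1 ≤ s + w)] using
      Nat.add_one_mul_choose_eq (s + w - 1) w
  have hcoef : 2 * (s + w) ≤ (w + 1) * (s + 1) := by nlinarith
  refine Nat.lt_of_mul_lt_mul_left (a := w + 1) ?_
  calc (w + 1) * ((s + w).choose (w + 1) * 2 ^ (w + 1))
      = 2 * (s + w) * ((s + w - 1).choose w * 2 ^ w) := by
        rw [pow_succ]; linear_combination 2 * 2 ^ w * pascal.symm
    _ ≤ (w + 1) * (s + 1) * ((s + w - 1).choose w * 2 ^ w) := by gcongr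
    _ < (w + 1) * (s + 1) * (s + 1) ^ w := by gcongr
    _ = (w + 1) * (s + 1) ^ (w + 1) := by ring

theorem choose_mul_two_pow_lt_pow {s w₀ w : ℕ} (hs : 1 ≤ s) (hw₀ : 1 ≤ w₀)
    (h₀ : (s + w₀ - 1).choose w₀ * 2 ^ w₀ < (s + 1) ^ w₀) (hw : w₀ ≤ w) :
    (s + w - 1).choose w * 2 ^ w < (s + 1) ^ w := by
  induction w, hw using Nat.le_induction with
  | base => exact h₀
  | succ w hw ih => simpa using choose_mul_two_pow_lt_pow_succ hs (by omega) ih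

theorem choose_two_mul_add_two_le {s : ℕ} (hs : 1 ≤ s) :
    (2 * s + 2).choose (s + 2) ≤ 6 * (2 * s).choose (s + 1) := by
  have pascal₁ :
      (2 * s + 2).choose (s + 2) = (2 * s + 1).choose (s + 1) + (2 * s + 1).choose (s + 2) :=
    Nat.choose_succ_succ _ _
  have pascal₂ : (2 * s + 1).choose (s + 1) = (2 * s).choose s + (2 * s).choose (s + 1) :=
    Nat.choose_succ_succ _ _
  have past_middle : (2 * s + 1).choose (s + 2) ≤ (2 * s + 1).choose (s + 1) := by
    rw [Nat.choose_symm_half]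
    simpa [show (2 * s + 1) / 2 = s by omega] using Nat.choose_le_middle (s + 2) (2 * s + 1)
  have central : (2 * s).choose s ≤ 2 * (2 * s).choose (s + 1) := by
    have h := Nat.choose_succ_right_eq (2 * s) s
    rw [show 2 * s - s = s by omega] at h
    refine Nat.le_of_mul_le_mul_right (c := s) ?_ (by omega)
    nlinarith
  omega

theorem choose_two_mul_mul_two_pow_lt {s : ℕ} (hs : 4 ≤ s) :
    (2 * s).choose (s + 1) * 2 ^ (s + 1) < (s + 1) ^ (s + 1) := by
  induction s, hs using Nat.le_induction with
  | base => decide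
  | succ s hs ih =>
    calc (2 * (s + 1)).choose (s + 1 + 1) * 2 ^ (s + 1 + 1)
        ≤ 6 * (2 * s).choose (s + 1) * 2 ^ (s + 2) := by
          gcongr; exact choose_two_mul_add_two_le (by omega)
      _ = 12 * ((2 * s).choose (s + 1) * 2 ^ (s + 1)) := by ring
      _ < 12 * (s + 1) ^ (s + 1) := by gcongr
      _ ≤ (s + 2) * (2 * (s + 1) ^ (s + 1)) := by nlinarith [pow_pos (Nat.succ_pos s) (s + 1)]
      _ ≤ (s + 2) * (s + 2) ^ (s + 1) := by gcongr; exact two_mul_pow_le_succ_pow (by omega)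
      _ = (s + 1 + 1) ^ (s + 1 + 1) := by ring

theorem two_mul_kTuples_le (s : ℕ) {t : ℕ} (ht : 1 ≤ t) :
    2 * kTuples s t ≤ (s + t - 1).choose t * 2 ^ t := by
  calc 2 * kTuples s t ≤ 2 * ((s + t - 1).choose t * 2 ^ (t - 1)) := by
        gcongr; exact kTuples_le s t
    _ = (s + t - 1).choose t * 2 ^ t := by rw [mul_left_comm, ← pow_succ', Nat.sub_add_cancel ht]

theorem kTuples_two_three_le : kTuples 2 3 ≤ 12 :=
  (kTuples_le_sum 2 3).trans (by decide)

theorem two_mul_kTuples_lt_pow (p w : ℕ) (hp : p.Prime) (h3 : 3 ≤ p) (hw : p ≤ w) :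
    2 * kTuples (p - 1) w < p ^ w := by
  obtain ⟨s, rfl⟩ : ∃ s, p = s + 1 := ⟨p - 1, by omega⟩
  rw [Nat.add_sub_cancel]
  have hs : s ≠ 3 := by rintro rfl; norm_num at hp
  have bound := two_mul_kTuples_le s (show 1 ≤ w by omega)
  rcases (show s = 2 ∧ w = 3 ∨ s = 2 ∧ 4 ≤ w ∨ 4 ≤ s by omega)
    with ⟨rfl, rfl⟩ | ⟨rfl, hw₄⟩ | hs₄
  · linarith [kTuples_two_three_le]
  · exact bound.trans_lt (choose_mul_two_pow_lt_pow (w₀ := 4) (by norm_num) (by norm_num)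
      (by decide) hw₄)
  · have diagonal := choose_two_mul_mul_two_pow_lt hs₄
    rw [show 2 * s = s + (s + 1) - 1 by omega] at diagonal
    exact bound.trans_lt (choose_mul_two_pow_lt_pow (by omega) (by omega) diagonal hw)
end

section
/- Let p be a prime and let P and Q be finite p-groups. Then the sectional rank of the direct product P × Q equals the sum of the sectional ranks of P and Q. -/
/-!
Write a section of a group as a surjection `H ↠ 𝔽_p^r` from a subgroup `H`. Given such a section
of `P × Q`, let `K = H ∩ (P × 1)` and let `W ≤ 𝔽_p^r` be the image of `K`. Since `K` embeds in `P`,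
`W` is a section of `P`; since `H ↠ 𝔽_p^r ⧸ W` kills `K`, the kernel of the projection `H → Q`,
it factors through the image of `H` in `Q`, so `𝔽_p^r ⧸ W` is a section of `Q`. Subgroups and
quotients of `𝔽_p^r` are `𝔽_p`-subspaces and quotient spaces, so their dimensions add up to `r`.
Conversely, the product of sections of `P` and `Q` is a section of `P × Q`.
-/

/-- `IsSectionalRankSet p P r` says that `P` has a section `H ⧸ N` (with `H ≤ P` and
`N ⊴ H`) isomorphic to the elementary abelian group `(ℤ/pℤ)^r`. -/
def HasElemAbelianSection (p : ℕ) (P : Type*) [Group P] (r : ℕ) : Prop :=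
  ∃ (H : Subgroup P) (N : Subgroup H) (hN : N.Normal),
    letI := hN
    Nonempty ((H ⧸ N) ≃* (Fin r → Multiplicative (ZMod p)))

/-- The sectional rank of a group: the largest `r ≥ 0` such that the group has a
section isomorphic to the elementary abelian group `(ℤ/pℤ)^r`. -/
noncomputable def sectionalRank (p : ℕ) (P : Type*) [Group P] : ℕ :=
  sSup { r : ℕ | HasElemAbelianSection p P r }

open QuotientGroup

section ElementaryAbelian

variable {p : ℕ}

lemma card_pi_multiplicative_zmod (p r : ℕ) :
    Nat.card (Fin r → Multiplicative (ZMod p)) = p ^ r := by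
  rw [Nat.card_pi, Finset.prod_const, Finset.card_univ, Fintype.card_fin,
    Nat.card_congr Multiplicative.toAdd, Nat.card_zmod]

lemma exponent_pi_multiplicative_zmod_dvd (p r : ℕ) :
    Monoid.exponent (Fin r → Multiplicative (ZMod p)) ∣ p :=
  Monoid.exponent_dvd_iff_forall_pow_eq_one.2 fun x => funext fun i =>
    Multiplicative.toAdd.injective <| by simp

lemma exists_mulEquiv_pi_multiplicative_zmod (hp : p.Prime) (G : Type*) [CommGroup G] [Finite G]
    (hG : Monoid.exponent G ∣ p) :
    ∃ s, Nonempty (G ≃* (Fin s → Multiplicative (ZMod p))) := by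
  have := Fact.mk hp
  let _ : Module (ZMod p) (Additive G) := AddCommGroup.zmodModule fun x =>
    AddMonoid.exponent_dvd_iff_forall_nsmul_eq_zero.1 hG x
  let b := Module.Basis.ofVectorSpace (ZMod p) (Additive G)
  obtain ⟨s, ⟨e⟩⟩ := Finite.exists_equiv_fin (Module.Basis.ofVectorSpaceIndex (ZMod p) (Additive G))
  exact ⟨s, ⟨(MulEquiv.multiplicativeAdditive G).symm.trans <|
    (b.reindex e).equivFun.toAddEquiv.toMultiplicative.trans (MulEquiv.funMultiplicative _ _)⟩⟩

lemma exists_add_eq_mulEquiv_subgroup_quotient (hp : p.Prime) {r : ℕ}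
    (W : Subgroup (Fin r → Multiplicative (ZMod p))) :
    ∃ s t, s + t = r ∧ Nonempty (W ≃* (Fin s → Multiplicative (ZMod p))) ∧
      Nonempty ((Fin r → Multiplicative (ZMod p)) ⧸ W ≃* (Fin t → Multiplicative (ZMod p))) := by
  have := Fact.mk hp
  obtain ⟨s, ⟨eW⟩⟩ := exists_mulEquiv_pi_multiplicative_zmod hp W
    ((Monoid.exponent_dvd_of_monoidHom W.subtype W.subtype_injective).trans
      (exponent_pi_multiplicative_zmod_dvd p r))
  obtain ⟨t, ⟨eQ⟩⟩ := exists_mulEquiv_pi_multiplicative_zmod hp (_ ⧸ W)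
    ((Group.exponent_quotient_dvd W).trans (exponent_pi_multiplicative_zmod_dvd p r))
  refine ⟨s, t, Nat.pow_right_injective hp.two_le ?_, ⟨eW⟩, ⟨eQ⟩⟩
  simp only [pow_add, ← card_pi_multiplicative_zmod, ← Nat.card_congr eW.toEquiv,
    ← Nat.card_congr eQ.toEquiv]
  rw [mul_comm, ← Subgroup.card_eq_card_quotient_mul_card_subgroup]

end ElementaryAbelian

section Sections

variable {p : ℕ} {G G' : Type*} [Group G] [Group G'] {r : ℕ}

lemma hasElemAbelianSection_of_surjective (f : G →* (Fin r → Multiplicative (ZMod p)))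
    (hf : Function.Surjective f) : HasElemAbelianSection p G r :=
  ⟨⊤, (f.comp (⊤ : Subgroup G).subtype).ker, inferInstance,
    ⟨quotientKerEquivOfSurjective _ fun y =>
      let ⟨x, hx⟩ := hf y
      ⟨⟨x, trivial⟩, hx⟩⟩⟩

lemma HasElemAbelianSection.zero (p : ℕ) (G : Type*) [Group G] : HasElemAbelianSection p G 0 :=
  hasElemAbelianSection_of_surjective 1 fun _ => ⟨1, Subsingleton.elim _ _⟩

lemma HasElemAbelianSection.of_injective (φ : G →* G') (hφ : Function.Injective φ)
    (h : HasElemAbelianSection p G r) : HasElemAbelianSection p G' r := by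
  obtain ⟨H, N, hN, ⟨e⟩⟩ := h
  let ψ : H ≃* H.map φ := H.equivMapOfInjective φ hφ
  have := hN.map (ψ : H →* H.map φ) ψ.surjective
  exact ⟨H.map φ, N.map (ψ : H →* H.map φ), this, ⟨(QuotientGroup.congr N _ ψ rfl).symm.trans e⟩⟩

lemma hasElemAbelianSection_of_ker_le (g : G →* G') (f : G →* (Fin r → Multiplicative (ZMod p)))
    (hf : Function.Surjective f) (hle : g.ker ≤ f.ker) : HasElemAbelianSection p G' r := by
  let f' := (QuotientGroup.lift g.ker f hle).comp (quotientKerEquivRange g).symm.toMonoidHom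
  have hf' : Function.Surjective f' :=
    (lift_surjective_of_surjective _ f hf hle).comp (quotientKerEquivRange g).symm.surjective
  exact (hasElemAbelianSection_of_surjective f' hf').of_injective g.range.subtype
    g.range.subtype_injective

lemma HasElemAbelianSection.pow_le_card [Finite G] (h : HasElemAbelianSection p G r) :
    p ^ r ≤ Nat.card G := by
  obtain ⟨H, N, hN, ⟨e⟩⟩ := h
  calc p ^ r = Nat.card (H ⧸ N) := by rw [Nat.card_congr e.toEquiv, card_pi_multiplicative_zmod]
    _ ≤ Nat.card H := Nat.card_le_card_of_surjective _ (mk'_surjective N)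
    _ ≤ Nat.card G := H.card_le_card_group

lemma bddAbove_hasElemAbelianSection [Finite G] (hp : 1 < p) :
    BddAbove {r | HasElemAbelianSection p G r} :=
  ⟨Nat.card G, fun _ h => (Nat.lt_pow_self hp).le.trans h.pow_le_card⟩

lemma HasElemAbelianSection.le_sectionalRank [Finite G] (hp : 1 < p)
    (h : HasElemAbelianSection p G r) : r ≤ sectionalRank p G :=
  le_csSup (bddAbove_hasElemAbelianSection hp) h

lemma hasElemAbelianSection_sectionalRank [Finite G] (hp : 1 < p) :
    HasElemAbelianSection p G (sectionalRank p G) :=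
  Nat.sSup_mem ⟨0, .zero p G⟩ (bddAbove_hasElemAbelianSection hp)

end Sections

section Prod

variable {p : ℕ} {P Q : Type*} [Group P] [Group Q]

lemma HasElemAbelianSection.prod (hp : p.Prime) {a b : ℕ} (ha : HasElemAbelianSection p P a)
    (hb : HasElemAbelianSection p Q b) : HasElemAbelianSection p (P × Q) (a + b) := by
  have := Fact.mk hp
  obtain ⟨H₁, N₁, hN₁, ⟨e₁⟩⟩ := ha
  obtain ⟨H₂, N₂, hN₂, ⟨e₂⟩⟩ := hb
  have hexp : Monoid.exponent
      ((Fin a → Multiplicative (ZMod p)) × (Fin b → Multiplicative (ZMod p))) ∣ p := by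
    rw [Monoid.exponent_prod]
    exact lcm_dvd (exponent_pi_multiplicative_zmod_dvd p a)
      (exponent_pi_multiplicative_zmod_dvd p b)
  obtain ⟨s, ⟨e⟩⟩ := exists_mulEquiv_pi_multiplicative_zmod hp _ hexp
  have hs : p ^ s = p ^ (a + b) := by
    rw [← card_pi_multiplicative_zmod, ← Nat.card_congr e.toEquiv, Nat.card_prod,
      card_pi_multiplicative_zmod, card_pi_multiplicative_zmod, pow_add]
  obtain rfl : s = a + b := Nat.pow_right_injective hp.two_le hs
  let χ := e.toMonoidHom.comp <|
    (e₁.toMonoidHom.comp (mk' N₁)).prodMap (e₂.toMonoidHom.comp (mk' N₂))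
  have hχ : Function.Surjective χ := e.surjective.comp <| by
    rw [MonoidHom.coe_prodMap]
    exact (e₁.surjective.comp (mk'_surjective N₁)).prodMap (e₂.surjective.comp (mk'_surjective N₂))
  exact (hasElemAbelianSection_of_surjective χ hχ).of_injective (H₁.subtype.prodMap H₂.subtype)
    (by rw [MonoidHom.coe_prodMap]; exact H₁.subtype_injective.prodMap H₂.subtype_injective)

lemma HasElemAbelianSection.exists_add_of_prod (hp : p.Prime) {r : ℕ}
    (h : HasElemAbelianSection p (P × Q) r) :
    ∃ s t, r = s + t ∧ HasElemAbelianSection p P s ∧ HasElemAbelianSection p Q t := by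
  obtain ⟨H, N, hN, ⟨e⟩⟩ := h
  let f := e.toMonoidHom.comp (mk' N)
  have hf : Function.Surjective f := e.surjective.comp (mk'_surjective N)
  let g := (MonoidHom.snd P Q).comp H.subtype
  let fK := f.comp g.ker.subtype
  obtain ⟨s, t, hst, ⟨eW⟩, ⟨eQ⟩⟩ := exists_add_eq_mulEquiv_subgroup_quotient hp fK.range
  refine ⟨s, t, hst.symm, ?_, ?_⟩
  · have hK : HasElemAbelianSection p g.ker s :=
      hasElemAbelianSection_of_surjective (eW.toMonoidHom.comp fK.rangeRestrict)
        (eW.surjective.comp fK.rangeRestrict_surjective)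
    refine hK.of_injective ((MonoidHom.fst P Q).comp (H.subtype.comp g.ker.subtype)) ?_
    intro x y hxy
    exact Subtype.ext <| Subtype.ext <| Prod.ext hxy (x.2.trans y.2.symm)
  · refine hasElemAbelianSection_of_ker_le g (eQ.toMonoidHom.comp ((mk' fK.range).comp f))
      (eQ.surjective.comp ((mk'_surjective _).comp hf)) fun x hx => ?_
    change eQ (f x : _ ⧸ fK.range) = 1
    rw [(QuotientGroup.eq_one_iff (f x)).2 (fK.mem_range.2 ⟨⟨x, hx⟩, rfl⟩), map_one]

end Prod

theorem sectionalRank_prod_general (p : ℕ) (hp : p.Prime)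
    (P Q : Type*) [Group P] [Fintype P] [Group Q] [Fintype Q] :
    sectionalRank p (P × Q) = sectionalRank p P + sectionalRank p Q := by
  apply le_antisymm
  · obtain ⟨s, t, hst, hs, ht⟩ :=
      (hasElemAbelianSection_sectionalRank (G := P × Q) hp.one_lt).exists_add_of_prod hp
    rw [hst]
    exact add_le_add (hs.le_sectionalRank hp.one_lt) (ht.le_sectionalRank hp.one_lt)
  · exact ((hasElemAbelianSection_sectionalRank hp.one_lt).prod hp
      (hasElemAbelianSection_sectionalRank hp.one_lt)).le_sectionalRank hp.one_lt

theorem sectionalRank_prod (p : ℕ) (hp : p.Prime)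
    (P Q : Type*) [Group P] [Fintype P] [Group Q] [Fintype Q]
    (hP : IsPGroup p P) (hQ : IsPGroup p Q) :
    sectionalRank p (P × Q) = sectionalRank p P + sectionalRank p Q :=
  sectionalRank_prod_general p hp P Q
end
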